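/- A non-crossing perfect matching on 2n bitonically k-colored vertices is a perfect k-colored (monochromatic) matching if and only if it has valid block structure and contains no bichromatic edge; equivalently, valid block structure together with absence of a shortest bichromatic edge satisfying properties (i)-(iv) of the previous lemma characterizes k-colored matchings. -/

import Mathlib

/-- A plane (non-crossing) perfect matching on the `2n` points `0, …, 2n-1`
in convex position. -/
structure NCMatching (n : ℕ) where
  pairs : Finset (ℕ × ℕ)
  mem_lt : ∀ p ∈ pairs, p.1 < p.2 ∧ p.2 < 2 * n
  covers : ∀ v, v < 2 * n → ∃! p, p ∈ pairs ∧ (p.1 = v ∨ p.2 = v)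
  noncross : ∀ p ∈ pairs, ∀ q ∈ pairs, ¬ (p.1 < q.1 ∧ q.1 < p.2 ∧ p.2 < q.2)

/-- Outdegree of vertex `v` (1 if `v` is matched to a larger vertex, else 0). -/
def NCMatching.out {n : ℕ} (M : NCMatching n) (v : ℕ) : ℕ :=
  (M.pairs.filter fun p => p.1 = v).card

/-- The outdegree sequence `(b_1, …, b_{2n})` of a matching. -/
def NCMatching.outList {n : ℕ} (M : NCMatching n) : List ℕ :=
  (List.range (2 * n)).map M.out

/-- A triangulation of the convex polygon with vertices `0, …, n+1` in convex
position: a maximal set of pairwise non-crossing diagonals (`n-1` many). -/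
structure Triangulation (n : ℕ) where
  diag : Finset (ℕ × ℕ)
  isDiag : ∀ e ∈ diag, e.1 + 2 ≤ e.2 ∧ e.2 ≤ n + 1 ∧ ¬(e.1 = 0 ∧ e.2 = n + 1)
  noncross : ∀ e ∈ diag, ∀ f ∈ diag, ¬ (e.1 < f.1 ∧ f.1 < e.2 ∧ e.2 < f.2)
  card_diag : diag.card = n - 1

/-- Outdegree of point `i` in a triangulation: edges are directed from lower to
higher index; hull edges are not counted, except `p_1 p_{n+2}` (counted at `0`). -/
def Triangulation.out {n : ℕ} (T : Triangulation n) (i : ℕ) : ℕ :=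
  (T.diag.filter fun e => e.1 = i).card + (if i = 0 then 1 else 0)

/-- The outdegree sequence `(d_1, …, d_n)` of a triangulation. -/
def Triangulation.outList {n : ℕ} (T : Triangulation n) : List ℕ :=
  (List.range n).map T.out

/-- Ballot sequences of length `2n`: 0/1 sequences with `n` ones whose every
prefix has at least as many ones as zeros. -/
def IsBallot (n : ℕ) (l : List ℕ) : Prop :=
  l.length = 2 * n ∧ (∀ x ∈ l, x = 0 ∨ x = 1) ∧ l.sum = n ∧
    ∀ m, m ≤ 2 * n → m ≤ 2 * (l.take m).sum

/-- Valid outdegree sequences of triangulations of a convex `(n+2)`-gon. -/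
def IsTriDeg (n : ℕ) (d : List ℕ) : Prop :=
  d.length = n ∧ d.sum = n ∧ ∀ l, l ≤ n → (d.reverse.take l).sum ≤ l

/-- From a degree sequence `(d_1,…,d_n)` to the ballot sequence consisting of
`d_i` ones followed by a zero, for each `i`. -/
def degToBallot (d : List ℕ) : List ℕ :=
  (d.map fun x => List.replicate x 1 ++ [0]).flatten

/-- From a ballot sequence `B` to the sequence `(d_1,…,d_n)` where `d_i` is the
number of ones between the `(i-1)`-st and the `i`-th zero of `B`. -/
def ballotToDeg (B : List ℕ) : List ℕ :=
  ((B.splitOn 0).map List.length).dropLast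

/-- The bitonic `k`-coloring `c_1,…,c_k,c_k,…,c_1,c_1,…` of the vertices. -/
def bitColor (k i : ℕ) : ℕ :=
  if (i / k) % 2 = 0 then i % k else k - 1 - i % k

/-- A perfect `k`-colored (monochromatic) matching: every edge joins two
vertices of the same color. -/
def Mono (k : ℕ) {n : ℕ} (M : NCMatching n) : Prop :=
  ∀ p ∈ M.pairs, bitColor k p.1 = bitColor k p.2

/-- Valid block structure: within each block of `k` consecutive vertices, every
vertex with an outgoing edge is followed only by vertices with outgoing edges. -/
def ValidBlock (k : ℕ) {n : ℕ} (M : NCMatching n) : Prop :=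
  ∀ u v, v < 2 * n → u / k = v / k → u < v → M.out u = 1 → M.out v = 1

/-- The hull edges of the convex polygon on `0, …, n+1`. -/
def hullEdges (n : ℕ) : Finset (ℕ × ℕ) :=
  ((Finset.range (n + 1)).image fun i => (i, i + 1)) ∪ {(0, n + 1)}

/-- The edges of the face with vertex set `S` (in convex position): consecutive
pairs of `S` together with the pair `(min S, max S)`. -/
def faceEdges (S : Finset ℕ) : Finset (ℕ × ℕ) :=
  (S ×ˢ S).filter fun p => p.1 < p.2 ∧
    ((∀ c ∈ S, ¬ (p.1 < c ∧ c < p.2)) ∨ (∀ c ∈ S, p.1 ≤ c ∧ c ≤ p.2))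

/-- A `t`-gonal tiling of the convex polygon on the points `0, …, n+1`:
a plane graph all of whose bounded faces are `t`-gons, given by its set of
(bounded) faces. -/
structure Tiling (t n : ℕ) where
  faces : Finset (Finset ℕ)
  sub : ∀ S ∈ faces, S ⊆ Finset.range (n + 2)
  size : ∀ S ∈ faces, S.card = t
  noncross : ∀ S ∈ faces, ∀ S' ∈ faces, ∀ e ∈ faceEdges S, ∀ e' ∈ faceEdges S',
      ¬ (e.1 < e'.1 ∧ e'.1 < e.2 ∧ e.2 < e'.2)
  share : ∀ S ∈ faces, ∀ S' ∈ faces, S ≠ S' → (S ∩ S').card ≤ 2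
  boundary : ∀ e ∈ hullEdges n, (faces.filter fun S => e ∈ faceEdges S).card = 1
  interior : ∀ S ∈ faces, ∀ e ∈ faceEdges S, e ∉ hullEdges n →
      (faces.filter fun S' => e ∈ faceEdges S').card = 2

/-- The dual graph of a tiling: one vertex per bounded face, two faces adjacent
iff they share a common edge. -/
def dualGraph {t n : ℕ} (T : Tiling t n) : SimpleGraph {S // S ∈ T.faces} where
  Adj A B := A ≠ B ∧ (faceEdges A.1 ∩ faceEdges B.1).Nonempty
  symm := by
    constructor
    rintro A B ⟨h1, h2⟩
    exact ⟨Ne.symm h1, by rwa [Finset.inter_comm]⟩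
  loopless := by constructor; rintro A ⟨h, -⟩; exact h rfl

/-- An ear of a tiling: a face all but one of whose edges lie on the hull. -/
def IsEar {t n : ℕ} (T : Tiling t n) (S : Finset ℕ) : Prop :=
  S ∈ T.faces ∧ (faceEdges S \ hullEdges n).card = 1

/-- A tiling is a subgraph of a triangulation if each of its non-hull edges is
a diagonal of the triangulation. -/
def SubTri {t n : ℕ} (T : Tiling t n) (𝒯 : Triangulation n) : Prop :=
  ∀ S ∈ T.faces, ∀ e ∈ faceEdges S, e ∉ hullEdges n → e ∈ 𝒯.diag

/-- A triangulation is `k`-color valid if, under the outdegree-sequence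
bijection, it corresponds to a perfect `k`-colored matching. -/
def KColorValidTri (k : ℕ) {n : ℕ} (𝒯 : Triangulation n) : Prop :=
  ∃ M : NCMatching n, Mono k M ∧ M.outList = degToBallot 𝒯.outList

/-- A `(k+2)`-gonal tiling is `k`-color valid if it is a subgraph of some
`k`-color valid triangulation. -/
def KColorValidTiling (k : ℕ) {n : ℕ} (T : Tiling (k + 2) n) : Prop :=
  ∃ 𝒯 : Triangulation n, KColorValidTri k 𝒯 ∧ SubTri T 𝒯

/-!
Take a shortest bichromatic edge `(a, b)`. All edges nested inside it are monochromatic, so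
every color occurs an even number of times strictly between `a` and `b`. Valid block structure
forces `a` and `b` into different blocks; between them lie the tail of the block of `a`, some
number `m` of full blocks (each carrying every color once) and the head of the block of `b`.
If `m` were even, tail and head would carry the same colors, and the bitonic coloring would give
`a` and `b` the same color; so `m` is odd, tail and head carry complementary color sets, and
their sizes force `b % k = a % k + 1`. Conversely, in a monochromatic matching an edge never
stays inside a block, and an out-vertex followed by an in-vertex in the same block would give
two crossing edges.
-/

open Finset

namespace NCMatching

variable {n : ℕ} (M : NCMatching n)

lemma eq_of_mem_of_mem {p q : ℕ × ℕ} (hp : p ∈ M.pairs) (hq : q ∈ M.pairs) {v : ℕ}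
    (hpv : p.1 = v ∨ p.2 = v) (hqv : q.1 = v ∨ q.2 = v) : p = q := by
  have hvn : v < 2 * n := by have := M.mem_lt p hp; omega
  exact (M.covers v hvn).unique ⟨hp, hpv⟩ ⟨hq, hqv⟩

lemma out_fst {p : ℕ × ℕ} (hp : p ∈ M.pairs) : M.out p.1 = 1 := by
  have : M.pairs.filter (fun q => q.1 = p.1) = {p} := by
    ext q
    simp only [mem_filter, mem_singleton]
    exact ⟨fun ⟨hq, h⟩ => M.eq_of_mem_of_mem hq hp (Or.inl h) (Or.inl rfl),
      by rintro rfl; exact ⟨hp, rfl⟩⟩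
  simp [NCMatching.out, this]

lemma out_snd {p : ℕ × ℕ} (hp : p ∈ M.pairs) : M.out p.2 = 0 := by
  have hlt := (M.mem_lt p hp).1
  simp only [NCMatching.out, card_eq_zero, filter_eq_empty_iff]
  intro q hq hqp
  have := M.eq_of_mem_of_mem hq hp (Or.inl hqp) (Or.inr rfl)
  subst this
  omega

lemma exists_mem_fst_of_out_eq_one {v : ℕ} (hv : M.out v = 1) : ∃ q ∈ M.pairs, q.1 = v := by
  have : 0 < (M.pairs.filter fun q => q.1 = v).card := by unfold NCMatching.out at hv; omega
  obtain ⟨q, hq⟩ := card_pos.mp this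
  exact ⟨q, (mem_filter.mp hq).1, (mem_filter.mp hq).2⟩

lemma exists_mem_snd_of_out_ne_one {v : ℕ} (hv : v < 2 * n) (hout : M.out v ≠ 1) :
    ∃ q ∈ M.pairs, q.2 = v := by
  obtain ⟨q, ⟨hq, hqv⟩, -⟩ := M.covers v hv
  refine ⟨q, hq, hqv.resolve_left fun h => hout ?_⟩
  exact h ▸ M.out_fst hq

lemma nested_of_mem_Ico {p q : ℕ × ℕ} (hp : p ∈ M.pairs) (hq : q ∈ M.pairs) {v : ℕ}
    (hv : v ∈ Ico (p.1 + 1) p.2) (hqv : q.1 = v ∨ q.2 = v) : p.1 < q.1 ∧ q.2 < p.2 := by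
  rw [mem_Ico] at hv
  have hne : p ≠ q := by rintro rfl; omega
  have h11 : q.1 ≠ p.1 := fun h => hne (M.eq_of_mem_of_mem hp hq (Or.inl rfl) (Or.inl h))
  have h12 : q.1 ≠ p.2 := fun h => hne (M.eq_of_mem_of_mem hp hq (Or.inr rfl) (Or.inl h))
  have h21 : q.2 ≠ p.1 := fun h => hne (M.eq_of_mem_of_mem hp hq (Or.inl rfl) (Or.inr h))
  have h22 : q.2 ≠ p.2 := fun h => hne (M.eq_of_mem_of_mem hp hq (Or.inr rfl) (Or.inr h))
  have := M.mem_lt q hq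
  have := M.noncross p hp q hq
  have := M.noncross q hq p hp
  omega

/-- The vertices strictly inside an edge are matched among themselves. -/
lemma even_card_filter_Ico {p : ℕ × ℕ} (hp : p ∈ M.pairs) (P : ℕ → Prop) [DecidablePred P]
    (hP : ∀ q ∈ M.pairs, p.1 < q.1 → q.2 < p.2 → (P q.1 ↔ P q.2)) :
    Even ((Ico (p.1 + 1) p.2).filter P).card := by
  set E := M.pairs.filter fun q => p.1 < q.1 ∧ q.2 < p.2 ∧ P q.1
  have hE : ∀ q ∈ E, q ∈ M.pairs ∧ p.1 < q.1 ∧ q.2 < p.2 ∧ P q.1 := fun q hq => by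
    simpa [E] using hq
  have hunion : (Ico (p.1 + 1) p.2).filter P = E.biUnion fun q => {q.1, q.2} := by
    ext v
    simp only [mem_filter, mem_biUnion, mem_insert, mem_singleton]
    constructor
    · rintro ⟨hv, hPv⟩
      have hvn : v < 2 * n := by have := M.mem_lt p hp; rw [mem_Ico] at hv; omega
      obtain ⟨q, ⟨hq, hqv⟩, -⟩ := M.covers v hvn
      obtain ⟨h1, h2⟩ := M.nested_of_mem_Ico hp hq hv hqv
      refine ⟨q, mem_filter.mpr ⟨hq, h1, h2, ?_⟩, by tauto⟩
      rcases hqv with rfl | rfl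
      exacts [hPv, (hP q hq h1 h2).mpr hPv]
    · rintro ⟨q, hqE, hv⟩
      obtain ⟨hq, h1, h2, hPq⟩ := hE q hqE
      have := (M.mem_lt q hq).1
      rcases hv with rfl | rfl
      · exact ⟨mem_Ico.mpr ⟨h1, by omega⟩, hPq⟩
      · exact ⟨mem_Ico.mpr ⟨by omega, h2⟩, (hP q hq h1 h2).mp hPq⟩
  have hdisj : (E : Set (ℕ × ℕ)).PairwiseDisjoint fun q => ({q.1, q.2} : Finset ℕ) := by
    intro q hq q' hq' hne
    simp only [Function.onFun, disjoint_left, mem_insert, mem_singleton]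
    intro v hv hv'
    exact hne (M.eq_of_mem_of_mem (hE q hq).1 (hE q' hq').1 (hv.imp Eq.symm Eq.symm)
      (hv'.imp Eq.symm Eq.symm))
  have hcard : ∀ q ∈ E, ({q.1, q.2} : Finset ℕ).card = 2 := fun q hq =>
    card_pair (M.mem_lt q (hE q hq).1).1.ne
  rw [hunion, card_biUnion hdisj, sum_congr rfl hcard, sum_const, smul_eq_mul]
  exact ⟨E.card, by ring⟩

end NCMatching

section Coloring

variable {k : ℕ}

lemma bitColor_lt (hk : 0 < k) (i : ℕ) : bitColor k i < k := by
  have := Nat.mod_lt i hk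
  unfold bitColor
  split <;> omega

lemma bitColor_add_mul (hk : 0 < k) (j : ℕ) {i : ℕ} (hi : i < k) :
    bitColor k (j * k + i) = if j % 2 = 0 then i else k - 1 - i := by
  have hdiv : (j * k + i) / k = j := by
    rw [mul_comm, Nat.mul_add_div hk, Nat.div_eq_of_lt hi, add_zero]
  have hmod : (j * k + i) % k = i := by
    rw [mul_comm, Nat.mul_add_mod, Nat.mod_eq_of_lt hi]
  rw [bitColor, hdiv, hmod]

lemma bitColor_injOn_block (hk : 0 < k) {u v : ℕ} (hblock : u / k = v / k)
    (hcolor : bitColor k u = bitColor k v) : u = v := by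
  have hu := Nat.div_add_mod u k
  have hv := Nat.div_add_mod v k
  have := Nat.mod_lt u hk
  have := Nat.mod_lt v hk
  unfold bitColor at hcolor
  rw [hblock] at hcolor hu
  split at hcolor <;> omega

def colorCount (k : ℕ) (s : Finset ℕ) (c : ℕ) : ℕ :=
  (s.filter fun v => bitColor k v = c).card

lemma colorCount_union {s t : Finset ℕ} (hst : Disjoint s t) (c : ℕ) :
    colorCount k (s ∪ t) c = colorCount k s c + colorCount k t c := by
  rw [colorCount, filter_union, card_union_of_disjoint (disjoint_filter_filter hst)]
  rfl

lemma sum_colorCount (hk : 0 < k) (s : Finset ℕ) :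
    ∑ c ∈ range k, colorCount k s c = s.card :=
  (card_eq_sum_card_fiberwise fun v _ => mem_range.mpr (bitColor_lt hk v)).symm

lemma colorCount_le_one (hk : 0 < k) {s : Finset ℕ} {j : ℕ} (hs : s ⊆ Ico (j * k) (j * k + k))
    (c : ℕ) : colorCount k s c ≤ 1 := by
  have hdiv : ∀ v ∈ s, v / k = j := fun v hv => by
    have := mem_Ico.mp (hs hv)
    exact Nat.div_eq_of_lt_le this.1 (by rw [add_one_mul]; exact this.2)
  refine card_le_one.mpr fun u hu v hv => ?_
  rw [mem_filter] at hu hv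
  exact bitColor_injOn_block hk ((hdiv u hu.1).trans (hdiv v hv.1).symm) (hu.2.trans hv.2.symm)

lemma colorCount_block (hk : 0 < k) (j : ℕ) {c : ℕ} (hc : c < k) :
    colorCount k (Ico (j * k) (j * k + k)) c = 1 := by
  refine le_antisymm (colorCount_le_one hk subset_rfl c) ?_
  set i := if j % 2 = 0 then c else k - 1 - c
  have hi : i < k := by simp only [i]; split <;> omega
  refine card_pos.mpr ⟨j * k + i, mem_filter.mpr ⟨mem_Ico.mpr ⟨by omega, by omega⟩, ?_⟩⟩
  rw [bitColor_add_mul hk j hi]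
  simp only [i]
  split_ifs <;> omega

lemma colorCount_blocks (hk : 0 < k) (j m : ℕ) {c : ℕ} (hc : c < k) :
    colorCount k (Ico (j * k) ((j + m) * k)) c = m := by
  induction m with
  | zero => simp [colorCount]
  | succ m ih =>
    have hsucc : (j + (m + 1)) * k = (j + m) * k + k := by ring
    have hle : j * k ≤ (j + m) * k := Nat.mul_le_mul_right k (Nat.le_add_right j m)
    rw [hsucc, ← Ico_union_Ico_eq_Ico hle (Nat.le_add_right _ k),
      colorCount_union (Ico_disjoint_Ico_consecutive _ _ _), ih, colorCount_block hk _ hc]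

lemma colorCount_Ico_eq (hk : 0 < k) {a b c : ℕ} (hab : a / k < b / k) (hc : c < k) :
    colorCount k (Ico (a + 1) b) c =
      colorCount k (Ico (a + 1) ((a / k + 1) * k)) c + (b / k - a / k - 1) +
        colorCount k (Ico (b / k * k) b) c := by
  have h1 : a + 1 ≤ (a / k + 1) * k := by
    have := Nat.lt_div_mul_add (a := a) hk; rw [add_one_mul]; omega
  have h2 : (a / k + 1) * k ≤ b / k * k := Nat.mul_le_mul_right k hab
  have h3 : b / k * k ≤ b := Nat.div_mul_le_self b k
  have hmid : b / k * k = (a / k + 1 + (b / k - a / k - 1)) * k := by congr 1; omega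
  have hdisj : Disjoint (Ico (a + 1) ((a / k + 1) * k))
      (Ico ((a / k + 1) * k) (b / k * k) ∪ Ico (b / k * k) b) := by
    rw [Ico_union_Ico_eq_Ico h2 h3]; exact Ico_disjoint_Ico_consecutive _ _ _
  rw [← Ico_union_Ico_eq_Ico h1 (h2.trans h3), ← Ico_union_Ico_eq_Ico h2 h3,
    colorCount_union hdisj, colorCount_union (Ico_disjoint_Ico_consecutive _ _ _), hmid,
    colorCount_blocks hk _ _ hc, ← hmid, add_assoc]

theorem odd_and_mod_of_even_colorCount (hk : 0 < k) {a b : ℕ} (hab : a / k < b / k)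
    (heven : ∀ c < k, Even (colorCount k (Ico (a + 1) b) c))
    (hcolor : bitColor k a ≠ bitColor k b) :
    Odd (b / k - a / k - 1) ∧ b % k = a % k + 1 := by
  set T := Ico (a + 1) ((a / k + 1) * k)
  set H := Ico (b / k * k) b
  set m := b / k - a / k - 1
  have hT : ∀ c, colorCount k T c ≤ 1 := colorCount_le_one hk <|
    Ico_subset_Ico (by have := Nat.div_mul_le_self a k; omega) (add_one_mul _ _).le
  have hH : ∀ c, colorCount k H c ≤ 1 := colorCount_le_one hk <|
    Ico_subset_Ico le_rfl (Nat.lt_div_mul_add hk).le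
  have hTcard : ∑ c ∈ range k, colorCount k T c = k - 1 - a % k := by
    rw [sum_colorCount hk, Nat.card_Ico, add_one_mul]
    have := Nat.div_add_mod' a k; have := Nat.mod_lt a hk; omega
  have hHcard : ∑ c ∈ range k, colorCount k H c = b % k := by
    rw [sum_colorCount hk, Nat.card_Ico]
    have := Nat.div_add_mod' b k; omega
  have hparity : ∀ c < k, Even (colorCount k T c + m + colorCount k H c) := fun c hc =>
    colorCount_Ico_eq hk hab hc ▸ heven c hc
  rcases Nat.even_or_odd m with ⟨t, ht⟩ | hodd
  · -- `a` and `b` lie in blocks of opposite parity, so `hsize` gives them the same color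
    have hsame : ∀ c ∈ range k, colorCount k T c = colorCount k H c := fun c hc => by
      obtain ⟨x, hx⟩ := hparity c (mem_range.mp hc)
      have := hT c; have := hH c; omega
    have hsize : k - 1 - a % k = b % k := by rw [← hTcard, ← hHcard, sum_congr rfl hsame]
    exfalso
    apply hcolor
    have := Nat.mod_lt a hk
    unfold bitColor
    split_ifs <;> omega
  · have hcompl : ∀ c ∈ range k, colorCount k T c + colorCount k H c = 1 := fun c hc => by
      obtain ⟨x, hx⟩ := hparity c (mem_range.mp hc)
      obtain ⟨y, hy⟩ := hodd
      have := hT c; have := hH c; omega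
    have hsize : k - 1 - a % k + b % k = k := by
      rw [← hTcard, ← hHcard, ← sum_add_distrib, sum_congr rfl hcompl, sum_const, card_range,
        smul_eq_mul, mul_one]
    have := Nat.mod_lt a hk
    exact ⟨hodd, by omega⟩

end Coloring

section Matching

variable {k n : ℕ} {M : NCMatching n}

lemma Mono.div_ne (hk : 0 < k) (hM : Mono k M) {p : ℕ × ℕ} (hp : p ∈ M.pairs) :
    p.1 / k ≠ p.2 / k := fun h =>
  (M.mem_lt p hp).1.ne (bitColor_injOn_block hk h (hM p hp))

lemma Mono.validBlock (hk : 0 < k) (hM : Mono k M) : ValidBlock k M := by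
  intro u v hv hblock huv hu
  by_contra hout
  obtain ⟨q, hq, rfl⟩ := M.exists_mem_fst_of_out_eq_one hu
  obtain ⟨q', hq', rfl⟩ := M.exists_mem_snd_of_out_ne_one hv hout
  have hq := M.mem_lt q hq
  have hq' := M.mem_lt q' hq'
  have hqv : q'.2 < q.2 := Nat.lt_of_div_lt_div <| hblock ▸
    lt_of_le_of_ne (Nat.div_le_div_right hq.1.le) (hM.div_ne hk ‹_›)
  have huq : q'.1 < q.1 := Nat.lt_of_div_lt_div <| hblock ▸
    lt_of_le_of_ne (Nat.div_le_div_right hq'.1.le) (hM.div_ne hk ‹_›)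
  exact M.noncross q' ‹_› q ‹_› ⟨huq, huv, hqv⟩

lemma ValidBlock.div_lt (hVB : ValidBlock k M) {p : ℕ × ℕ} (hp : p ∈ M.pairs) :
    p.1 / k < p.2 / k := by
  have hlt := M.mem_lt p hp
  refine lt_of_le_of_ne (Nat.div_le_div_right hlt.1.le) fun h => ?_
  have := hVB p.1 p.2 hlt.2 h hlt.1 (M.out_fst hp)
  rw [M.out_snd hp] at this
  exact zero_ne_one this

lemma exists_innermost_bichromatic (hM : ¬ Mono k M) :
    ∃ p ∈ M.pairs, bitColor k p.1 ≠ bitColor k p.2 ∧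
      ∀ q ∈ M.pairs, p.1 < q.1 → q.2 < p.2 → bitColor k q.1 = bitColor k q.2 := by
  simp only [Mono, not_forall] at hM
  obtain ⟨p₀, hp₀, hbi₀⟩ := hM
  obtain ⟨p, hpB, hmin⟩ := exists_min_image
    (M.pairs.filter fun p => bitColor k p.1 ≠ bitColor k p.2) (fun p => p.2 - p.1)
    ⟨p₀, mem_filter.mpr ⟨hp₀, hbi₀⟩⟩
  obtain ⟨hp, hbi⟩ := mem_filter.mp hpB
  refine ⟨p, hp, hbi, fun q hq h1 h2 => ?_⟩
  by_contra hq'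
  have := hmin q (mem_filter.mpr ⟨hq, hq'⟩)
  have := (M.mem_lt q hq).1
  omega

end Matching

theorem stmt14_general (k n : ℕ) (hk : 2 ≤ k) (M : NCMatching n) :
    Mono k M ↔
      (ValidBlock k M ∧
        ¬ ∃ p ∈ M.pairs,
          bitColor k p.1 ≠ bitColor k p.2 ∧
          p.1 / k ≠ p.2 / k ∧
          (∀ q ∈ M.pairs, p.1 < q.1 → q.2 < p.2 →
            bitColor k q.1 = bitColor k q.2) ∧
          Odd (p.2 / k - p.1 / k - 1) ∧
          p.2 % k = p.1 % k + 1) := by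
  have hk0 : 0 < k := by omega
  constructor
  · intro hM
    exact ⟨hM.validBlock hk0, fun ⟨p, hp, hbi, _⟩ => hbi (hM p hp)⟩
  · rintro ⟨hVB, hno⟩
    by_contra hM
    obtain ⟨p, hp, hbi, hinner⟩ := exists_innermost_bichromatic hM
    have hblocks := hVB.div_lt hp
    have heven : ∀ c < k, Even (colorCount k (Ico (p.1 + 1) p.2) c) := fun c _ =>
      M.even_card_filter_Ico hp _ fun q hq h1 h2 => by rw [hinner q hq h1 h2]
    obtain ⟨hodd, hmod⟩ := odd_and_mod_of_even_colorCount hk0 hblocks heven hbi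
    exact hno ⟨p, hp, hbi, hblocks.ne, hinner, hodd, hmod⟩

/-- A non-crossing perfect matching on bitonically `k`-colored vertices is
monochromatic iff it has valid block structure and contains no edge as in
Lemma `shortestedge` (properties (i)-(iv)). -/
theorem stmt14 (k n : ℕ) (hk : 2 ≤ k) (hdvd : k ∣ n) (M : NCMatching n) :
    Mono k M ↔
      (ValidBlock k M ∧
        ¬ ∃ p ∈ M.pairs,
          bitColor k p.1 ≠ bitColor k p.2 ∧
          p.1 / k ≠ p.2 / k ∧
          (∀ q ∈ M.pairs, p.1 < q.1 → q.2 < p.2 →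
            bitColor k q.1 = bitColor k q.2) ∧
          Odd (p.2 / k - p.1 / k - 1) ∧
          p.2 % k = p.1 % k + 1) :=
  stmt14_general k n hk M
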